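/- Let S and A be nonempty finite types, γ ∈ (0,1), P a row-stochastic matrix of size |S×A|×|S|, r ∈ ℝ^{S×A}, and ρ₀ ∈ ℝ^S a vector with nonnegative entries summing to 1. For a policy π given by a row-stochastic matrix Π^π of size |S|×|S×A| define P^π = Π^πP, r^π = Π^πr, v^π = (I − γP^π)⁻¹r^π, q^π = r + γPv^π, η(π) = ρ₀ᵀv^π, and ρ^πᵀ = ρ₀ᵀ(I − γP^π)⁻¹; for policies π, π′ define Ā^π_{π'} = (Π^{π'} − Π^π)q^π, and define D_KL^max(π ‖ π′) = max over states s of Σⱼ Π^π(s,j) · log(Π^π(s,j)/Π^{π'}(s,j)) (with the convention that a term is 0 when Π^π(s,j) = 0). Let π, π′ be target policies and β a behavior policy, and assume every entry of Π^{π'} is strictly positive. Then for every α ∈ [0,1]: η(π′) − η(π) ≥ α ρ^πᵀ Ā^π_{π'} + (1−α) ρ^βᵀ Ā^π_{π'} − (2γ/(1−γ)²) · (α · D_KL^max(π ‖ π′) + (1−α) · (D_KL^max(π ‖ π′) · D_KL^max(β ‖ π′))^{1/2}) · ‖q^π‖∞. -/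

import Mathlib

open Matrix BigOperators

/-- A matrix is row-stochastic if all entries are nonnegative and every row sums to 1. -/
def IsStochastic {m n : Type*} [Fintype m] [Fintype n] (M : Matrix m n ℝ) : Prop :=
  (∀ i j, 0 ≤ M i j) ∧ ∀ i, ∑ j, M i j = 1

/-- `‖x‖∞`: the maximum absolute entry of a vector. -/
noncomputable def normInfV {n : Type*} [Fintype n] (x : n → ℝ) : ℝ :=
  ⨆ i, |x i|

/-- `D_KL^max(Π ‖ Π′)`: the maximum over rows `s` of `Σⱼ Π(s,j) log(Π(s,j)/Π′(s,j))`.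
(When `Π(s,j) = 0` the term is `0 * log 0 = 0` by the convention `Real.log 0 = 0`,
matching the convention that such terms vanish.) -/
noncomputable def DKLmax {m n : Type*} [Fintype m] [Fintype n]
    (M M' : Matrix m n ℝ) : ℝ :=
  ⨆ s, ∑ j, M s j * Real.log (M s j / M' s j)

/-!
The performance difference identity writes `η(π') - η(π)` as the advantage `Ā` weighted by the
discounted occupancy `ρ^{π'}` of `π'`. Replacing `ρ^{π'}` by `ρ^π` or `ρ^β` perturbs the resolvent
`(I - γ Π P)⁻¹` by at most `γ / (1 - γ)²` times the `ℓ∞` operator-norm distance of the policies,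
and `‖Ā‖∞ ≤ ‖Π^{π'} - Π^π‖ ‖q^π‖∞`. Both policy distances are bounded row by row by Pinsker's
inequality `∑ⱼ |pⱼ - qⱼ| ≤ √(2 KL(p ‖ q))`, which follows from the pointwise bound
`3 (p - q)² / (2 (p + 2q)) ≤ p log (p / q) + q - p` and Cauchy–Schwarz.
-/

open Real Set InformationTheory

attribute [local instance] Matrix.linftyOpNormedAddCommGroup

section Pinsker

lemma hasDerivAt_klFun_sub_sq_div {x : ℝ} (hx : 0 < x) :
    HasDerivAt (fun t => klFun t - 3 * (t - 1) ^ 2 / (2 * (t + 2)))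
      (log x - 3 / 2 + 27 / (2 * (x + 2) ^ 2)) x := by
  have hx2 : 2 * (x + 2) ≠ 0 := by positivity
  refine ((hasDerivAt_klFun hx.ne').sub ((((hasDerivAt_id' x).sub_const 1).pow 2).const_mul 3
    |>.div (((hasDerivAt_id' x).add_const 2).const_mul 2) hx2)).congr_deriv ?_
  simp only [Pi.pow_apply]
  field_simp
  ring

lemma monotoneOn_log_add_div_sq :
    MonotoneOn (fun t => log t - 3 / 2 + 27 / (2 * (t + 2) ^ 2)) (Ioi 0) := by
  have hderiv : ∀ t > 0, HasDerivAt (fun t => log t - 3 / 2 + 27 / (2 * (t + 2) ^ 2))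
      (t⁻¹ - 27 / (t + 2) ^ 3) t := fun t ht => by
    have ht2 : 2 * (t + 2) ^ 2 ≠ 0 := by positivity
    refine (((hasDerivAt_log ht.ne').sub_const _).add ((hasDerivAt_const t (27 : ℝ)).div
      ((((hasDerivAt_id' t).add_const 2).pow 2).const_mul 2) ht2)).congr_deriv ?_
    simp only [Pi.pow_apply]
    field_simp
    ring
  refine monotoneOn_of_hasDerivWithinAt_nonneg (f' := fun t => t⁻¹ - 27 / (t + 2) ^ 3)
    (convex_Ioi 0) (fun t ht => (hderiv t ht).continuousAt.continuousWithinAt)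
    (fun t ht => ?_) (fun t ht => ?_) <;> simp only [interior_Ioi, mem_Ioi] at ht
  · exact (hderiv t ht).hasDerivWithinAt
  · -- `(t + 2) ^ 3 - 27 t = (t - 1) ^ 2 (t + 8)`
    rw [sub_nonneg, div_le_iff₀ (by positivity), inv_mul_eq_div, le_div_iff₀ ht]
    nlinarith [mul_nonneg (sq_nonneg (t - 1)) ht.le]

/-- The difference of the two sides is convex with a critical point at `t = 1`. -/
lemma sq_div_le_klFun {t : ℝ} (ht : 0 ≤ t) : 3 * (t - 1) ^ 2 / (2 * (t + 2)) ≤ klFun t := by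
  set h := fun t => klFun t - 3 * (t - 1) ^ 2 / (2 * (t + 2))
  have hconv : ConvexOn ℝ (Ici 0) h := by
    refine MonotoneOn.convexOn_of_deriv (convex_Ici 0) (fun t ht => ?_) ?_ ?_
    · have : 2 * (t + 2) ≠ 0 := by simp only [mem_Ici] at ht; positivity
      exact (continuous_klFun.continuousAt.sub
        (by fun_prop (disch := exact this))).continuousWithinAt
    · rw [interior_Ici]
      exact fun t ht => (hasDerivAt_klFun_sub_sq_div ht).differentiableAt.differentiableWithinAt
    · rw [interior_Ici]
      exact monotoneOn_log_add_div_sq.congr fun t ht =>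
        (hasDerivAt_klFun_sub_sq_div ht).deriv.symm
  have hmin : IsMinOn h (Ici 0) 1 := by
    refine hconv.isMinOn_of_rightDeriv_eq_zero (by simp) ?_
    rw [(hasDerivAt_klFun_sub_sq_div one_pos).hasDerivWithinAt.derivWithin
      (uniqueDiffWithinAt_Ioi 1)]
    norm_num
  have : h 1 ≤ h t := hmin ht
  norm_num [h, klFun_one] at this
  linarith

lemma sq_sub_div_le_mul_log_div_add_sub {p q : ℝ} (hp : 0 ≤ p) (hq : 0 < q) :
    3 * (p - q) ^ 2 / (2 * (p + 2 * q)) ≤ p * log (p / q) + q - p := by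
  have h := mul_le_mul_of_nonneg_left (sq_div_le_klFun (div_nonneg hp hq.le)) hq.le
  have hpq : p + 2 * q ≠ 0 := by positivity
  have hlhs : q * (3 * (p / q - 1) ^ 2 / (2 * (p / q + 2))) =
      3 * (p - q) ^ 2 / (2 * (p + 2 * q)) := by
    field_simp
  have hrhs : q * klFun (p / q) = p * log (p / q) + q - p := by
    rw [klFun_apply]
    field_simp
  rwa [hlhs, hrhs] at h

variable {ι : Type*} [Fintype ι] {p q : ι → ℝ}

lemma sum_sq_sub_div_le_sum_mul_log_div (hp : ∀ j, 0 ≤ p j) (hq : ∀ j, 0 < q j)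
    (hp1 : ∑ j, p j = 1) (hq1 : ∑ j, q j = 1) :
    3 / 2 * ∑ j, (p j - q j) ^ 2 / (p j + 2 * q j) ≤ ∑ j, p j * log (p j / q j) :=
  calc 3 / 2 * ∑ j, (p j - q j) ^ 2 / (p j + 2 * q j)
      = ∑ j, 3 * (p j - q j) ^ 2 / (2 * (p j + 2 * q j)) := by
        rw [Finset.mul_sum]
        refine Finset.sum_congr rfl fun j _ => ?_
        have : p j + 2 * q j ≠ 0 := by linarith [hp j, hq j]
        field_simp
    _ ≤ ∑ j, (p j * log (p j / q j) + q j - p j) :=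
        Finset.sum_le_sum fun j _ => sq_sub_div_le_mul_log_div_add_sub (hp j) (hq j)
    _ = ∑ j, p j * log (p j / q j) := by
        rw [Finset.sum_sub_distrib, Finset.sum_add_distrib, hp1, hq1, add_sub_cancel_right]

lemma sum_mul_log_div_nonneg (hp : ∀ j, 0 ≤ p j) (hq : ∀ j, 0 < q j)
    (hp1 : ∑ j, p j = 1) (hq1 : ∑ j, q j = 1) : 0 ≤ ∑ j, p j * log (p j / q j) :=
  (mul_nonneg (by norm_num) (Finset.sum_nonneg fun j _ =>
    div_nonneg (sq_nonneg _) (by linarith [hp j, hq j]))).trans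
    (sum_sq_sub_div_le_sum_mul_log_div hp hq hp1 hq1)

/-- Pinsker's inequality: Cauchy–Schwarz against the weights `p + 2q`, of total mass `3`. -/
lemma sq_sum_abs_sub_le_two_mul_sum_mul_log_div (hp : ∀ j, 0 ≤ p j) (hq : ∀ j, 0 < q j)
    (hp1 : ∑ j, p j = 1) (hq1 : ∑ j, q j = 1) :
    (∑ j, |p j - q j|) ^ 2 ≤ 2 * ∑ j, p j * log (p j / q j) := by
  have hw : ∀ j ∈ Finset.univ, 0 < p j + 2 * q j := fun j _ => by linarith [hp j, hq j]
  have hmass : ∑ j, (p j + 2 * q j) = 3 := by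
    rw [Finset.sum_add_distrib, ← Finset.mul_sum, hp1, hq1]
    norm_num
  have hCS := Finset.sq_sum_div_le_sum_sq_div Finset.univ (fun j => |p j - q j|) hw
  simp only [sq_abs, hmass] at hCS
  linarith [sum_sq_sub_div_le_sum_mul_log_div hp hq hp1 hq1]

end Pinsker

section Stochastic

variable {m n : Type*} [Fintype m] [Fintype n]

lemma linfty_opNorm_le_of_forall_sum_abs_le {M : Matrix m n ℝ} {c : ℝ} (hc : 0 ≤ c)
    (h : ∀ i, ∑ j, |M i j| ≤ c) : ‖M‖ ≤ c := by
  change ‖fun i => WithLp.toLp 1 (M i)‖ ≤ c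
  refine (pi_norm_le_iff_of_nonneg hc).2 fun i => ?_
  simpa [PiLp.norm_eq_of_L1] using h i

lemma normInfV_eq_norm (x : n → ℝ) : normInfV x = ‖x‖ := by
  refine le_antisymm (Real.iSup_le (fun i => ?_) (norm_nonneg x))
    ((pi_norm_le_iff_of_nonneg (Real.iSup_nonneg fun i => abs_nonneg _)).2 fun i => ?_)
  · rw [← Real.norm_eq_abs]
    exact norm_le_pi_norm x i
  · rw [Real.norm_eq_abs]
    exact le_ciSup (Set.finite_range fun i => |x i|).bddAbove i

lemma sum_mul_log_div_le_DKLmax (M M' : Matrix m n ℝ) (i : m) :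
    ∑ j, M i j * log (M i j / M' i j) ≤ DKLmax M M' :=
  le_ciSup (Set.finite_range fun i => ∑ j, M i j * log (M i j / M' i j)).bddAbove i

lemma DKLmax_nonneg {M M' : Matrix m n ℝ} (hM : IsStochastic M) (hM' : IsStochastic M')
    (hpos : ∀ i j, 0 < M' i j) : 0 ≤ DKLmax M M' :=
  Real.iSup_nonneg fun i => sum_mul_log_div_nonneg (hM.1 i) (hpos i) (hM.2 i) (hM'.2 i)

lemma IsStochastic.linfty_opNorm_sub_le_sqrt_DKLmax {M M' : Matrix m n ℝ}
    (hM : IsStochastic M) (hM' : IsStochastic M') (hpos : ∀ i j, 0 < M' i j) :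
    ‖M' - M‖ ≤ √(2 * DKLmax M M') := by
  refine linfty_opNorm_le_of_forall_sum_abs_le (Real.sqrt_nonneg _) fun i => ?_
  simp only [Matrix.sub_apply, abs_sub_comm (M' i _)]
  refine (Real.le_sqrt_of_sq_le
    (sq_sum_abs_sub_le_two_mul_sum_mul_log_div (hM.1 i) (hpos i) (hM.2 i) (hM'.2 i))).trans ?_
  gcongr
  exact sum_mul_log_div_le_DKLmax M M' i

lemma abs_dotProduct_le_norm {p : n → ℝ} (hp : ∀ j, 0 ≤ p j) (hp1 : ∑ j, p j = 1)
    (v : n → ℝ) : |p ⬝ᵥ v| ≤ ‖v‖ :=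
  calc |p ⬝ᵥ v| ≤ ∑ j, p j * |v j| := by
        refine (Finset.abs_sum_le_sum_abs _ _).trans_eq (Finset.sum_congr rfl fun j _ => ?_)
        rw [abs_mul, abs_of_nonneg (hp j)]
    _ ≤ ∑ j, p j * ‖v‖ := by
        gcongr with j
        · exact hp j
        · rw [← Real.norm_eq_abs]
          exact norm_le_pi_norm v j
    _ = ‖v‖ := by rw [← Finset.sum_mul, hp1, one_mul]

lemma IsStochastic.mul {l : Type*} [Fintype l] {M : Matrix m n ℝ} {N : Matrix n l ℝ}
    (hM : IsStochastic M) (hN : IsStochastic N) : IsStochastic (M * N) := by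
  refine ⟨fun i k => Finset.sum_nonneg fun j _ => mul_nonneg (hM.1 i j) (hN.1 j k), fun i => ?_⟩
  simp only [mul_apply]
  rw [Finset.sum_comm]
  simp only [← Finset.mul_sum, hN.2, mul_one, hM.2 i]

lemma IsStochastic.norm_mulVec_le {M : Matrix m n ℝ} (hM : IsStochastic M) (v : n → ℝ) :
    ‖M *ᵥ v‖ ≤ ‖v‖ :=
  (pi_norm_le_iff_of_nonneg (norm_nonneg v)).2 fun i => by
    rw [Real.norm_eq_abs]
    exact abs_dotProduct_le_norm (hM.1 i) (hM.2 i) v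

variable [DecidableEq m] {Q : Matrix m m ℝ} {γ : ℝ}

lemma IsStochastic.mul_norm_le_norm_one_sub_smul_mulVec (hQ : IsStochastic Q) (hγ : 0 ≤ γ)
    (v : m → ℝ) : (1 - γ) * ‖v‖ ≤ ‖(1 - γ • Q) *ᵥ v‖ := by
  have hsmul : ‖γ • (Q *ᵥ v)‖ ≤ γ * ‖v‖ := by
    rw [norm_smul, Real.norm_of_nonneg hγ]
    exact mul_le_mul_of_nonneg_left (hQ.norm_mulVec_le v) hγ
  rw [sub_mulVec, one_mulVec, smul_mulVec]
  linarith [norm_sub_norm_le v (γ • (Q *ᵥ v))]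

lemma IsStochastic.isUnit_det_one_sub_smul (hQ : IsStochastic Q) (hγ0 : 0 ≤ γ) (hγ1 : γ < 1) :
    IsUnit (1 - γ • Q).det := by
  refine (isUnit_iff_isUnit_det _).1 (mulVec_injective_iff_isUnit.1 fun v w hvw => ?_)
  have h := hQ.mul_norm_le_norm_one_sub_smul_mulVec hγ0 (v - w)
  rw [mulVec_sub, hvw, sub_self, norm_zero] at h
  exact sub_eq_zero.1 (norm_le_zero_iff.1 (nonpos_of_mul_nonpos_right h (sub_pos.2 hγ1)))

lemma IsStochastic.norm_inv_one_sub_smul_mulVec_le (hQ : IsStochastic Q) (hγ0 : 0 ≤ γ)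
    (hγ1 : γ < 1) (w : m → ℝ) : ‖(1 - γ • Q)⁻¹ *ᵥ w‖ ≤ (1 - γ)⁻¹ * ‖w‖ := by
  have h := hQ.mul_norm_le_norm_one_sub_smul_mulVec hγ0 ((1 - γ • Q)⁻¹ *ᵥ w)
  rw [mulVec_mulVec, mul_nonsing_inv _ (hQ.isUnit_det_one_sub_smul hγ0 hγ1), one_mulVec] at h
  rwa [inv_mul_eq_div, le_div_iff₀ (sub_pos.2 hγ1), mul_comm]

end Stochastic

section MarkovDecisionProcess

variable {S ι : Type*} [Fintype S] [Fintype ι] [DecidableEq S]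

noncomputable def stateValue (γ : ℝ) (P : Matrix ι S ℝ) (pol : Matrix S ι ℝ) (r : ι → ℝ) :
    S → ℝ :=
  (1 - γ • (pol * P))⁻¹ *ᵥ (pol *ᵥ r)

noncomputable def actionValue (γ : ℝ) (P : Matrix ι S ℝ) (pol : Matrix S ι ℝ) (r : ι → ℝ) :
    ι → ℝ :=
  r + γ • (P *ᵥ stateValue γ P pol r)

variable {γ : ℝ} {P : Matrix ι S ℝ} {pol pol' : Matrix S ι ℝ}

lemma mulVec_actionValue (r : ι → ℝ) (h : IsUnit (1 - γ • (pol * P)).det) :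
    pol *ᵥ actionValue γ P pol r = stateValue γ P pol r := by
  have hbellman : (1 - γ • (pol * P)) *ᵥ stateValue γ P pol r = pol *ᵥ r := by
    rw [stateValue, mulVec_mulVec, mul_nonsing_inv _ h, one_mulVec]
  rw [actionValue, mulVec_add, mulVec_smul, mulVec_mulVec, ← hbellman, sub_mulVec, one_mulVec,
    smul_mulVec]
  abel

/-- The performance difference identity `η(π') - η(π) = ρ^{π'}ᵀ Ā^π_{π'}`. -/
lemma dotProduct_stateValue_sub_dotProduct_stateValue (r : ι → ℝ)
    (h : IsUnit (1 - γ • (pol * P)).det) (h' : IsUnit (1 - γ • (pol' * P)).det) (ρ : S → ℝ) :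
    ρ ⬝ᵥ stateValue γ P pol' r - ρ ⬝ᵥ stateValue γ P pol r =
      (ρ ᵥ* (1 - γ • (pol' * P))⁻¹) ⬝ᵥ ((pol' - pol) *ᵥ actionValue γ P pol r) := by
  have hadv : (pol' - pol) *ᵥ actionValue γ P pol r =
      pol' *ᵥ r - (1 - γ • (pol' * P)) *ᵥ stateValue γ P pol r := by
    rw [sub_mulVec, mulVec_actionValue r h, actionValue, mulVec_add, mulVec_smul, mulVec_mulVec,
      sub_mulVec, one_mulVec, smul_mulVec]
    abel
  rw [← dotProduct_sub, ← dotProduct_mulVec, hadv, mulVec_sub,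
    mulVec_mulVec (stateValue γ P pol r), nonsing_inv_mul _ h', one_mulVec]
  rfl

lemma norm_inv_mulVec_sub_inv_mulVec_le {pol₁ pol₂ : Matrix S ι ℝ} (hP : IsStochastic P)
    (hpol₁ : IsStochastic pol₁) (hpol₂ : IsStochastic pol₂) (hγ0 : 0 ≤ γ) (hγ1 : γ < 1)
    (w : S → ℝ) :
    ‖(1 - γ • (pol₁ * P))⁻¹ *ᵥ w - (1 - γ • (pol₂ * P))⁻¹ *ᵥ w‖ ≤
      γ / (1 - γ) ^ 2 * ‖pol₁ - pol₂‖ * ‖w‖ := by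
  have hQ₁ := hpol₁.mul hP
  have hQ₂ := hpol₂.mul hP
  have hunit : IsUnit (1 - γ • (pol₁ * P)) ↔ IsUnit (1 - γ • (pol₂ * P)) := by
    simp only [isUnit_iff_isUnit_det, hQ₁.isUnit_det_one_sub_smul hγ0 hγ1,
      hQ₂.isUnit_det_one_sub_smul hγ0 hγ1]
  have hsub : (1 - γ • (pol₂ * P)) - (1 - γ • (pol₁ * P)) = γ • ((pol₁ - pol₂) * P) := by
    rw [Matrix.sub_mul, smul_sub]
    abel
  rw [← sub_mulVec, inv_sub_inv hunit, hsub, ← mulVec_mulVec, ← mulVec_mulVec, smul_mulVec,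
    ← mulVec_mulVec]
  calc _ ≤ (1 - γ)⁻¹ * ‖γ • ((pol₁ - pol₂) *ᵥ (P *ᵥ ((1 - γ • (pol₂ * P))⁻¹ *ᵥ w)))‖ :=
        hQ₁.norm_inv_one_sub_smul_mulVec_le hγ0 hγ1 _
    _ ≤ (1 - γ)⁻¹ * (γ * (‖pol₁ - pol₂‖ * ((1 - γ)⁻¹ * ‖w‖))) := by
        rw [norm_smul, Real.norm_of_nonneg hγ0]
        gcongr
        refine (linfty_opNorm_mulVec _ _).trans ?_
        gcongr
        exact (hP.norm_mulVec_le _).trans (hQ₂.norm_inv_one_sub_smul_mulVec_le hγ0 hγ1 w)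
    _ = γ / (1 - γ) ^ 2 * ‖pol₁ - pol₂‖ * ‖w‖ := by
        field_simp

lemma dotProduct_advantage_sub_le {pol pol₁ pol₂ : Matrix S ι ℝ} {ρ : S → ℝ}
    (hρ : ∀ s, 0 ≤ ρ s) (hρ1 : ∑ s, ρ s = 1) (hP : IsStochastic P) (hpol : IsStochastic pol)
    (hpol₁ : IsStochastic pol₁) (hpol₂ : IsStochastic pol₂) (hpos : ∀ s j, 0 < pol₁ s j)
    (hγ0 : 0 ≤ γ) (hγ1 : γ < 1) (q : ι → ℝ) :
    (ρ ᵥ* (1 - γ • (pol₂ * P))⁻¹) ⬝ᵥ ((pol₁ - pol) *ᵥ q) -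
        2 * γ / (1 - γ) ^ 2 * √(DKLmax pol pol₁ * DKLmax pol₂ pol₁) * ‖q‖ ≤
      (ρ ᵥ* (1 - γ • (pol₁ * P))⁻¹) ⬝ᵥ ((pol₁ - pol) *ᵥ q) := by
  set w := (pol₁ - pol) *ᵥ q
  have hD := DKLmax_nonneg hpol hpol₁ hpos
  have hD₂ := DKLmax_nonneg hpol₂ hpol₁ hpos
  have hclose : |ρ ⬝ᵥ ((1 - γ • (pol₁ * P))⁻¹ *ᵥ w) - ρ ⬝ᵥ ((1 - γ • (pol₂ * P))⁻¹ *ᵥ w)| ≤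
      γ / (1 - γ) ^ 2 * (‖pol₁ - pol₂‖ * ‖w‖) := by
    rw [← dotProduct_sub, ← mul_assoc]
    exact (abs_dotProduct_le_norm hρ hρ1 _).trans
      (norm_inv_mulVec_sub_inv_mulVec_le hP hpol₁ hpol₂ hγ0 hγ1 w)
  have hw : ‖w‖ ≤ √(2 * DKLmax pol pol₁) * ‖q‖ :=
    (linfty_opNorm_mulVec _ _).trans
      (by gcongr; exact hpol.linfty_opNorm_sub_le_sqrt_DKLmax hpol₁ hpos)
  have hpinsker : ‖pol₁ - pol₂‖ * ‖w‖ ≤ 2 * √(DKLmax pol pol₁ * DKLmax pol₂ pol₁) * ‖q‖ :=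
    calc ‖pol₁ - pol₂‖ * ‖w‖ ≤ √(2 * DKLmax pol₂ pol₁) * (√(2 * DKLmax pol pol₁) * ‖q‖) :=
          mul_le_mul (hpol₂.linfty_opNorm_sub_le_sqrt_DKLmax hpol₁ hpos) hw (norm_nonneg _)
            (Real.sqrt_nonneg _)
      _ = 2 * √(DKLmax pol pol₁ * DKLmax pol₂ pol₁) * ‖q‖ := by
          rw [← mul_assoc, ← Real.sqrt_mul (by positivity),
            show 2 * DKLmax pol₂ pol₁ * (2 * DKLmax pol pol₁) =
              2 ^ 2 * (DKLmax pol pol₁ * DKLmax pol₂ pol₁) by ring,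
            Real.sqrt_mul (by positivity), Real.sqrt_sq zero_le_two]
  have hK : 0 ≤ γ / (1 - γ) ^ 2 := by positivity
  have hconst : 2 * γ / (1 - γ) ^ 2 * √(DKLmax pol pol₁ * DKLmax pol₂ pol₁) * ‖q‖ =
      γ / (1 - γ) ^ 2 * (2 * √(DKLmax pol pol₁ * DKLmax pol₂ pol₁) * ‖q‖) := by ring
  rw [← dotProduct_mulVec, ← dotProduct_mulVec, hconst]
  linarith [neg_abs_le (ρ ⬝ᵥ ((1 - γ • (pol₁ * P))⁻¹ *ᵥ w) -
    ρ ⬝ᵥ ((1 - γ • (pol₂ * P))⁻¹ *ᵥ w)), mul_le_mul_of_nonneg_left hpinsker hK]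

end MarkovDecisionProcess

theorem on_and_off_policy_improvement_with_KL_general
    {S A : Type*} [Fintype S] [Fintype A] [DecidableEq S]
    (γ : ℝ) (hγ : γ ∈ Set.Ioo (0 : ℝ) 1)
    (P : Matrix (S × A) S ℝ) (hP : IsStochastic P)
    (r : S × A → ℝ)
    (ρ₀ : S → ℝ) (hρ₀pos : ∀ s, 0 ≤ ρ₀ s) (hρ₀sum : ∑ s, ρ₀ s = 1)
    (polπ polπ' polβ : Matrix S (S × A) ℝ)
    (hpolπ : IsStochastic polπ) (hpolπ' : IsStochastic polπ') (hpolβ : IsStochastic polβ)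
    (hpolπ'pos : ∀ s j, 0 < polπ' s j)
    (α : ℝ) (hα : α ∈ Set.Icc (0 : ℝ) 1) :
    let Pπ := polπ * P
    let Pπ' := polπ' * P
    let Pβ := polβ * P
    let vπ := (1 - γ • Pπ)⁻¹ *ᵥ (polπ *ᵥ r)
    let vπ' := (1 - γ • Pπ')⁻¹ *ᵥ (polπ' *ᵥ r)
    let qπ := r + γ • (P *ᵥ vπ)
    let Abar := (polπ' - polπ) *ᵥ qπ
    let ρπ := ρ₀ ᵥ* (1 - γ • Pπ)⁻¹
    let ρβ := ρ₀ ᵥ* (1 - γ • Pβ)⁻¹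
    ρ₀ ⬝ᵥ vπ' - ρ₀ ⬝ᵥ vπ ≥
      α * (ρπ ⬝ᵥ Abar) + (1 - α) * (ρβ ⬝ᵥ Abar) -
        2 * γ / (1 - γ) ^ 2 *
          (α * DKLmax polπ polπ' +
            (1 - α) * Real.sqrt (DKLmax polπ polπ' * DKLmax polβ polπ')) *
          normInfV qπ := by
  intro Pπ Pπ' Pβ vπ vπ' qπ Abar ρπ ρβ
  obtain ⟨hγ0, hγ1⟩ := hγ
  obtain ⟨hα0, hα1⟩ := hα
  have hunit {pol : Matrix S (S × A) ℝ} (hpol : IsStochastic pol) :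
      IsUnit (1 - γ • (pol * P)).det :=
    (hpol.mul hP).isUnit_det_one_sub_smul hγ0.le hγ1
  have hgain : ρ₀ ⬝ᵥ vπ' - ρ₀ ⬝ᵥ vπ = (ρ₀ ᵥ* (1 - γ • Pπ')⁻¹) ⬝ᵥ Abar :=
    dotProduct_stateValue_sub_dotProduct_stateValue r (hunit hpolπ) (hunit hpolπ') ρ₀
  have hon := dotProduct_advantage_sub_le hρ₀pos hρ₀sum hP hpolπ hpolπ' hpolπ hpolπ'pos
    hγ0.le hγ1 qπ
  have hoff := dotProduct_advantage_sub_le hρ₀pos hρ₀sum hP hpolπ hpolπ' hpolβ hpolπ'pos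
    hγ0.le hγ1 qπ
  rw [Real.sqrt_mul_self (DKLmax_nonneg hpolπ hpolπ' hpolπ'pos)] at hon
  rw [hgain, normInfV_eq_norm]
  nlinarith [mul_le_mul_of_nonneg_left hon hα0, mul_le_mul_of_nonneg_left hoff (sub_nonneg.2 hα1)]

/-- Corollary 2. `polπ`, `polπ'`, `polβ` are the policy matrices
`Π^π, Π^{π'}, Π^β`, with `Π^{π'}` entrywise positive:
`η(π′) − η(π) ≥ α ρ^πᵀ Ā^π_{π'} + (1−α) ρ^βᵀ Ā^π_{π'}
  − (2γ/(1−γ)²)(α D_KL^max(π‖π′) + (1−α) (D_KL^max(π‖π′) D_KL^max(β‖π′))^{1/2})‖q^π‖∞`. -/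
theorem on_and_off_policy_improvement_with_KL
    {S A : Type*} [Fintype S] [Fintype A] [Nonempty S] [Nonempty A] [DecidableEq S]
    (γ : ℝ) (hγ : γ ∈ Set.Ioo (0 : ℝ) 1)
    (P : Matrix (S × A) S ℝ) (hP : IsStochastic P)
    (r : S × A → ℝ)
    (ρ₀ : S → ℝ) (hρ₀pos : ∀ s, 0 ≤ ρ₀ s) (hρ₀sum : ∑ s, ρ₀ s = 1)
    (polπ polπ' polβ : Matrix S (S × A) ℝ)
    (hpolπ : IsStochastic polπ) (hpolπ' : IsStochastic polπ') (hpolβ : IsStochastic polβ)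
    (hpolπ'pos : ∀ s j, 0 < polπ' s j)
    (α : ℝ) (hα : α ∈ Set.Icc (0 : ℝ) 1) :
    let Pπ := polπ * P
    let Pπ' := polπ' * P
    let Pβ := polβ * P
    let vπ := (1 - γ • Pπ)⁻¹ *ᵥ (polπ *ᵥ r)
    let vπ' := (1 - γ • Pπ')⁻¹ *ᵥ (polπ' *ᵥ r)
    let qπ := r + γ • (P *ᵥ vπ)
    let Abar := (polπ' - polπ) *ᵥ qπ
    let ρπ := ρ₀ ᵥ* (1 - γ • Pπ)⁻¹
    let ρβ := ρ₀ ᵥ* (1 - γ • Pβ)⁻¹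
    ρ₀ ⬝ᵥ vπ' - ρ₀ ⬝ᵥ vπ ≥
      α * (ρπ ⬝ᵥ Abar) + (1 - α) * (ρβ ⬝ᵥ Abar) -
        2 * γ / (1 - γ) ^ 2 *
          (α * DKLmax polπ polπ' +
            (1 - α) * Real.sqrt (DKLmax polπ polπ' * DKLmax polβ polπ')) *
          normInfV qπ :=
  on_and_off_policy_improvement_with_KL_general γ hγ P hP r ρ₀ hρ₀pos hρ₀sum polπ polπ' polβ hpolπ
    hpolπ' hpolβ hpolπ'pos α hα
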